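/- (Symmetries of the canonical leading term.) For n ≥ 3 the element l̂_n := 6·(n−1,n) − Σ_{(a,b)} (a,b) of M_n, where the sum runs over all six ordered pairs (a,b) of distinct elements of {n−2,n−1,n}, satisfies: (l1) Σ_ω ω·l̂_n = 0, the sum over all six permutations ω ∈ Σ_n of {n−2,n−1,n} fixing all other elements; (l2) for n ≥ 4, Σ_ω sgn(ω)·(ω·l̂_n) = 0, the sum over all six permutations ω of {n−3,n−2,n−1} fixing all other elements; (l3) for n ≥ 4, ω·l̂_n = l̂_n for every permutation ω fixing n−2, n−1, n; and (l4) for n ≥ 4, Σ_{τ,λ} sgn(τ)sgn(λ)·(τλ·l̂_n) = 0, the sum over permutations τ of {n−3,n−2} and λ of {n−1,n} fixing all other elements. -/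
import Mathlib


noncomputable section

/- Common setup: `Pn n` is the set of ordered pairs of distinct elements of `Fin n`,
`Mn n` the real vector space of finitely supported real functions on `Pn n`, with the
`Σ_n`-action `π • (i,j) = (π i, π j)`, and `eps` the augmentation sending every basis
vector to `1`; `Kr(n) = ker eps`. -/

/-- Ordered pairs of distinct elements of `{1,…,n}`. -/
abbrev Pn (n : ℕ) := {p : Fin n × Fin n // p.1 ≠ p.2}

/-- The vector space `M_n` of finitely supported real functions on `Pn n`. -/
abbrev Mn (n : ℕ) := Pn n →₀ ℝ

/-- The basis vector of `Mn n` corresponding to a pair `(i,j)`. -/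
def bv {n : ℕ} (p : Pn n) : Mn n := Finsupp.single p 1

/-- The linear action of `π ∈ Σ_n` on `M_n`, `π • (i,j) = (π i, π j)`. -/
def act {n : ℕ} (π : Equiv.Perm (Fin n)) : Mn n →ₗ[ℝ] Mn n :=
  Finsupp.lmapDomain ℝ ℝ fun p => ⟨(π p.1.1, π p.1.2), fun h => p.2 (π.injective h)⟩

/-- The augmentation `ε : M_n → ℝ` sending every basis vector to `1`. -/
def eps (n : ℕ) : Mn n →ₗ[ℝ] ℝ := Finsupp.lsum ℝ fun _ => LinearMap.id

/-- The element `n` of `{1,…,n}` (1-indexed). -/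
def q1 {n : ℕ} (_h : 2 ≤ n) : Fin n := ⟨n - 1, by omega⟩
/-- The element `n-1` of `{1,…,n}` (1-indexed). -/
def q2 {n : ℕ} (_h : 2 ≤ n) : Fin n := ⟨n - 2, by omega⟩
/-- The element `n-2` of `{1,…,n}` (1-indexed). -/
def q3 {n : ℕ} (_h : 3 ≤ n) : Fin n := ⟨n - 3, by omega⟩
/-- The element `n-3` of `{1,…,n}` (1-indexed). -/
def q4 {n : ℕ} (_h : 4 ≤ n) : Fin n := ⟨n - 4, by omega⟩

/-- `t̂_n := (n−1,n) − (n,n−1)`. -/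
def tHat {n : ℕ} (h : 2 ≤ n) : Mn n :=
  bv ⟨(q2 h, q1 h), Fin.ne_of_val_ne (show n - 2 ≠ n - 1 by omega)⟩
    - bv ⟨(q1 h, q2 h), Fin.ne_of_val_ne (show n - 1 ≠ n - 2 by omega)⟩

/-- `r̂_n := (n−2,n) − (n−1,n)`. -/
def rHat {n : ℕ} (h : 3 ≤ n) : Mn n :=
  bv ⟨(q3 h, q1 (by omega)), Fin.ne_of_val_ne (show n - 3 ≠ n - 1 by omega)⟩
    - bv ⟨(q2 (by omega), q1 (by omega)), Fin.ne_of_val_ne (show n - 2 ≠ n - 1 by omega)⟩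

/-- `l̂_n := 6·(n−1,n) − Σ_{(a,b)} (a,b)`, the sum over all six ordered pairs of distinct
elements of `{n−2, n−1, n}`. -/
def lHat {n : ℕ} (h : 3 ≤ n) : Mn n :=
  (6 : ℝ) • bv ⟨(q2 (by omega), q1 (by omega)),
      Fin.ne_of_val_ne (show n - 2 ≠ n - 1 by omega)⟩
    - (bv ⟨(q3 h, q2 (by omega)), Fin.ne_of_val_ne (show n - 3 ≠ n - 2 by omega)⟩
      + bv ⟨(q2 (by omega), q3 h), Fin.ne_of_val_ne (show n - 2 ≠ n - 3 by omega)⟩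
      + bv ⟨(q3 h, q1 (by omega)), Fin.ne_of_val_ne (show n - 3 ≠ n - 1 by omega)⟩
      + bv ⟨(q1 (by omega), q3 h), Fin.ne_of_val_ne (show n - 1 ≠ n - 3 by omega)⟩
      + bv ⟨(q2 (by omega), q1 (by omega)), Fin.ne_of_val_ne (show n - 2 ≠ n - 1 by omega)⟩
      + bv ⟨(q1 (by omega), q2 (by omega)), Fin.ne_of_val_ne (show n - 1 ≠ n - 2 by omega)⟩)


lemma act_bv {n : ℕ} (π : Equiv.Perm (Fin n)) (p : Pn n) :
    act π (bv p) = bv ⟨(π p.1.1, π p.1.2), fun h => p.2 (π.injective h)⟩ :=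
  Finsupp.mapDomain_single

/-- symmetries of the canonical leading term `l̂_n`:
(l1) the sum over all six permutations of `{n-2, n-1, n}` of `ω·l̂_n` vanishes;
(l2) for `n ≥ 4`, the signed sum over all six permutations of `{n-3, n-2, n-1}` vanishes;
(l3) for `n ≥ 4`, invariance under every permutation fixing `n-2`, `n-1`, `n`;
(l4) for `n ≥ 4`, the signed sum over permutations `τ` of `{n-3,n-2}` and `λ` of `{n-1,n}`
vanishes. -/
theorem statement8 (n : ℕ) (h : 3 ≤ n) :
    lHat h
      + act (Equiv.swap (q3 h) (q2 (show 2 ≤ n by omega))) (lHat h)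
      + act (Equiv.swap (q3 h) (q1 (show 2 ≤ n by omega))) (lHat h)
      + act (Equiv.swap (q2 (show 2 ≤ n by omega)) (q1 (show 2 ≤ n by omega))) (lHat h)
      + act (Equiv.swap (q3 h) (q2 (show 2 ≤ n by omega))
          * Equiv.swap (q2 (show 2 ≤ n by omega)) (q1 (show 2 ≤ n by omega))) (lHat h)
      + act (Equiv.swap (q2 (show 2 ≤ n by omega)) (q1 (show 2 ≤ n by omega))
          * Equiv.swap (q3 h) (q2 (show 2 ≤ n by omega))) (lHat h) = 0
    ∧ (∀ h4 : 4 ≤ n,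
        lHat h
          - act (Equiv.swap (q4 h4) (q3 h)) (lHat h)
          - act (Equiv.swap (q4 h4) (q2 (show 2 ≤ n by omega))) (lHat h)
          - act (Equiv.swap (q3 h) (q2 (show 2 ≤ n by omega))) (lHat h)
          + act (Equiv.swap (q4 h4) (q3 h)
              * Equiv.swap (q3 h) (q2 (show 2 ≤ n by omega))) (lHat h)
          + act (Equiv.swap (q3 h) (q2 (show 2 ≤ n by omega))
              * Equiv.swap (q4 h4) (q3 h)) (lHat h) = 0)
    ∧ (∀ _h4 : 4 ≤ n, ∀ ω : Equiv.Perm (Fin n),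
        ω (q3 h) = q3 h → ω (q2 (show 2 ≤ n by omega)) = q2 (show 2 ≤ n by omega) →
        ω (q1 (show 2 ≤ n by omega)) = q1 (show 2 ≤ n by omega) →
        act ω (lHat h) = lHat h)
    ∧ (∀ h4 : 4 ≤ n,
        lHat h
          - act (Equiv.swap (q4 h4) (q3 h)) (lHat h)
          - act (Equiv.swap (q2 (show 2 ≤ n by omega)) (q1 (show 2 ≤ n by omega))) (lHat h)
          + act (Equiv.swap (q4 h4) (q3 h)
              * Equiv.swap (q2 (show 2 ≤ n by omega)) (q1 (show 2 ≤ n by omega)))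
              (lHat h) = 0) := by
  have h2 : 2 ≤ n := by omega
  have hbc : q3 h ≠ q2 h2 := Fin.ne_of_val_ne (show n - 3 ≠ n - 2 by omega)
  have hbd : q3 h ≠ q1 h2 := Fin.ne_of_val_ne (show n - 3 ≠ n - 1 by omega)
  have hcd : q2 h2 ≠ q1 h2 := Fin.ne_of_val_ne (show n - 2 ≠ n - 1 by omega)
  refine ⟨?_, fun h4 => ?_, fun _ ω hω3 hω2 hω1 => ?_, fun h4 => ?_⟩
  · simp only [lHat, map_smul, map_sub, map_add, act_bv, Equiv.Perm.mul_apply,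
      Equiv.swap_apply_left, Equiv.swap_apply_right,
      Equiv.swap_apply_of_ne_of_ne, hbc, hbd, hcd, hbc.symm, hbd.symm, hcd.symm,
      ne_eq, not_false_eq_true]
    module
  · have hab : q4 h4 ≠ q3 h := Fin.ne_of_val_ne (show n - 4 ≠ n - 3 by omega)
    have hac : q4 h4 ≠ q2 h2 := Fin.ne_of_val_ne (show n - 4 ≠ n - 2 by omega)
    have had : q4 h4 ≠ q1 h2 := Fin.ne_of_val_ne (show n - 4 ≠ n - 1 by omega)
    simp only [lHat, map_smul, map_sub, map_add, act_bv, Equiv.Perm.mul_apply,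
      Equiv.swap_apply_left, Equiv.swap_apply_right,
      Equiv.swap_apply_of_ne_of_ne, hab, hac, had, hbc, hbd, hcd,
      hab.symm, hac.symm, had.symm, hbc.symm, hbd.symm, hcd.symm,
      ne_eq, not_false_eq_true]
    module
  · simp only [lHat, map_smul, map_sub, map_add, act_bv, hω3, hω2, hω1]
  · have hab : q4 h4 ≠ q3 h := Fin.ne_of_val_ne (show n - 4 ≠ n - 3 by omega)
    have hac : q4 h4 ≠ q2 h2 := Fin.ne_of_val_ne (show n - 4 ≠ n - 2 by omega)
    have had : q4 h4 ≠ q1 h2 := Fin.ne_of_val_ne (show n - 4 ≠ n - 1 by omega)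
    simp only [lHat, map_smul, map_sub, map_add, act_bv, Equiv.Perm.mul_apply,
      Equiv.swap_apply_left, Equiv.swap_apply_right,
      Equiv.swap_apply_of_ne_of_ne, hab, hac, had, hbc, hbd, hcd,
      hab.symm, hac.symm, had.symm, hbc.symm, hbd.symm, hcd.symm,
      ne_eq, not_false_eq_true]
    module
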